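/- For every integer n ≥ 2, every generating set of the semigroup A^+(B_n) contains at least n elements of full support and at least n·(n!) elements of n-support. -/

import Mathlib

/-- The Brandt semigroup `B_n`, modeled as `Option (Fin n × Fin n)` where
`none` plays the role of the (two-sided) zero element `ϑ`. -/
def Brandt (n : ℕ) : Type := Option (Fin n × Fin n)

instance (n : ℕ) : DecidableEq (Brandt n) :=
  inferInstanceAs (DecidableEq (Option (Fin n × Fin n)))

instance (n : ℕ) : Fintype (Brandt n) :=
  inferInstanceAs (Fintype (Option (Fin n × Fin n)))

namespace Brandt

/-- The zero element `ϑ` of `B_n`. -/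
def theta (n : ℕ) : Brandt n := none

/-- The element `(i, j)` of `B_n`. -/
def pair {n : ℕ} (i j : Fin n) : Brandt n := some (i, j)

/-- The addition of the Brandt semigroup:
`(i,j) + (k,l) = (i,l)` if `j = k` and `ϑ` otherwise; `ϑ` is absorbing. -/
def add {n : ℕ} : Option (Fin n × Fin n) → Option (Fin n × Fin n) → Option (Fin n × Fin n)
  | some (i, j), some (k, l) => if j = k then some (i, l) else none
  | _, _ => none

instance (n : ℕ) : Add (Brandt n) := ⟨fun a b => Brandt.add a b⟩

end Brandt

/-- `M(B_n)`: all self-maps of `B_n`, with pointwise addition. -/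
abbrev MB (n : ℕ) := Brandt n → Brandt n

/-- `g` is an endomorphism of `(B_n, +)`. -/
def IsEndo {n : ℕ} (g : MB n) : Prop := ∀ a b : Brandt n, g (a + b) = g a + g b

/-- `g` is an automorphism of `(B_n, +)`. -/
def IsAuto {n : ℕ} (g : MB n) : Prop := IsEndo g ∧ Function.Bijective g

/-- The constant map `ξ_c` on `B_n` with value `c`. -/
def xi {n : ℕ} (c : Brandt n) : MB n := fun _ => c

/-- `C_{B_n}`, the set of all constant maps on `B_n`. -/
def ConstMaps (n : ℕ) : Set (MB n) := {f | ∃ c : Brandt n, f = xi c}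

/-- `f` is an affine map: a sum of an endomorphism and a constant map. -/
def IsAffine {n : ℕ} (f : MB n) : Prop := ∃ g c, IsEndo g ∧ f = g + xi c

/-- `A^+(B_n)`: the subsemigroup of `(M(B_n), +)` generated by the affine maps. -/
def Aplus (n : ℕ) : AddSubsemigroup (MB n) := AddSubsemigroup.closure {f | IsAffine f}

/-- `A^+(B_n)` as a set of maps. -/
def AplusSet (n : ℕ) : Set (MB n) := (Aplus n : Set (MB n))

/-- The support of `f`: the set of elements not mapped to `ϑ`. -/
def supp {n : ℕ} (f : MB n) : Set (Brandt n) := {a | f a ≠ Brandt.theta n}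

/-- `X_k`: the set of `k`-support elements of `X`. -/
def supportPart {n : ℕ} (X : Set (MB n)) (k : ℕ) : Set (MB n) :=
  {f ∈ X | (supp f).ncard = k}

/-- A subset `U` of an additive semigroup is independent if no element of `U`
lies in the subsemigroup generated by the remaining elements of `U`. -/
def IndepSet {β : Type*} [Add β] (U : Set β) : Prop :=
  ∀ a ∈ U, a ∉ AddSubsemigroup.closure (U \ {a})

/-- The `n`-support map `(p, q; σ)`, sending `(i, p)` to `(iσ, q)` and
everything else to `ϑ`. -/
def nMap {n : ℕ} (p q : Fin n) (σ : Equiv.Perm (Fin n)) : MB n := fun a =>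
  Option.elim (α := Fin n × Fin n) a (Brandt.theta n)
    (fun x => if x.2 = p then Brandt.pair (σ x.1) q else Brandt.theta n)

/-- The singleton support map `⟨(k, l), α⟩`, sending `(k, l)` to `α` and
everything else to `ϑ`. -/
def sMap {n : ℕ} (k l : Fin n) (α : Brandt n) : MB n :=
  fun a => if a = Brandt.pair k l then α else Brandt.theta n

/-- The set `S = {ξ_(i, i+1) : i ∈ [n-1]} ∪ {ξ_(n, 1)}`, i.e. the constant maps
`ξ_(i, i+1)` where the successor is taken cyclically in `[n]`. -/
def setS (n : ℕ) : Set (MB n) := {f | ∃ i : Fin n, f = xi (Brandt.pair i (finRotate n i))}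

/-- The set `T = {g + h : g ∈ Aut(B_n), h ∈ S}`. -/
def setT (n : ℕ) : Set (MB n) := {f | ∃ g h, IsAuto g ∧ h ∈ setS n ∧ f = g + h}
-- ===== auxiliary development =====
namespace Stmt5Aux
open Brandt

variable {n : ℕ}

lemma brandt_cases (a : Brandt n) : a = theta n ∨ ∃ i j, a = pair i j := by
  rcases a with _ | ⟨i, j⟩
  · exact Or.inl rfl
  · exact Or.inr ⟨i, j, rfl⟩

lemma theta_add (a : Brandt n) : theta n + a = theta n := rfl

lemma add_theta (a : Brandt n) : a + theta n = theta n := by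
  rcases a with _ | ⟨i, j⟩ <;> rfl

lemma pair_add_pair (i j k l : Fin n) :
    pair i j + pair k l = if j = k then pair i l else theta n := rfl

lemma pair_ne_theta {i j : Fin n} : pair i j ≠ theta n := fun h => Option.some_ne_none _ h

lemma pair_inj {i j k l : Fin n} : pair i j = pair k l ↔ i = k ∧ j = l := by
  constructor
  · intro h
    have := Option.some_injective _ h
    exact ⟨congrArg Prod.fst this, congrArg Prod.snd this⟩
  · rintro ⟨rfl, rfl⟩; rfl

lemma add_eq_pair {a b : Brandt n} {i j : Fin n} (h : a + b = pair i j) :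
    ∃ k, a = pair i k ∧ b = pair k j := by
  rcases brandt_cases a with rfl | ⟨i', k, rfl⟩
  · exact absurd ((theta_add b).symm.trans h) pair_ne_theta.symm
  rcases brandt_cases b with rfl | ⟨k', j', rfl⟩
  · exact absurd ((add_theta _).symm.trans h) pair_ne_theta.symm
  rw [pair_add_pair] at h
  by_cases hk : k = k'
  · rw [if_pos hk] at h
    obtain ⟨rfl, rfl⟩ := pair_inj.mp h
    exact ⟨k, rfl, hk ▸ rfl⟩
  · rw [if_neg hk] at h
    exact absurd h.symm pair_ne_theta

lemma add_apply (f g : MB n) (x : Brandt n) : (f + g) x = f x + g x := rfl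

/-- Maps supported inside the column `{(i,p) : i ∈ A}`, sending `(i,p)` to `(σ i, q)`. -/
def colMap (A : Finset (Fin n)) (p : Fin n) (σ : Equiv.Perm (Fin n)) (q : Fin n) : MB n :=
  fun a => Option.elim (α := Fin n × Fin n) a (Brandt.theta n)
    (fun x => if x.2 = p ∧ x.1 ∈ A then Brandt.pair (σ x.1) q else Brandt.theta n)

lemma colMap_theta (A : Finset (Fin n)) (p : Fin n) (σ : Equiv.Perm (Fin n)) (q : Fin n) :
    colMap A p σ q (theta n) = theta n := rfl

lemma colMap_pair (A : Finset (Fin n)) (p : Fin n) (σ : Equiv.Perm (Fin n)) (q i j : Fin n) :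
    colMap A p σ q (pair i j) = if j = p ∧ i ∈ A then pair (σ i) q else theta n := rfl

/-- Normal form for elements of `A⁺(B_n)`. -/
def GoodForm (f : MB n) : Prop :=
  f = xi (theta n) ∨ (∃ a b, f = xi (pair a b)) ∨
    ∃ A p σ q, f = colMap A p σ q

lemma endo_classify (g : MB n) (hg : IsEndo g) :
    (∃ r, g = xi (pair r r)) ∨ (∀ a, g a = theta n) ∨
      (∃ σ : Equiv.Perm (Fin n), g (theta n) = theta n ∧
        ∀ i j, g (pair i j) = pair (σ i) (σ j)) := by
  have h0 : g (theta n) = g (theta n) + g (theta n) := by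
    conv_lhs => rw [← theta_add (theta n), hg]
  rcases brandt_cases (g (theta n)) with hθ | ⟨r, r', hrr⟩
  · -- g θ = θ
    by_cases hz : ∀ i j, g (pair i j) = theta n
    · refine Or.inr (Or.inl fun a => ?_)
      rcases brandt_cases a with rfl | ⟨i, j, rfl⟩
      · exact hθ
      · exact hz i j
    · push_neg at hz
      obtain ⟨i₀, j₀, h₀⟩ := hz
      have key : ∀ u v, g (pair u v) ≠ theta n →
          ∀ k, g (pair u k) ≠ theta n ∧ g (pair k v) ≠ theta n := by
        intro u v huv k
        have hsplit : g (pair u v) = g (pair u k) + g (pair k v) := by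
          have : pair u v = pair u k + pair k v := by rw [pair_add_pair, if_pos rfl]
          rw [this, hg]
        constructor <;> intro hc <;> rw [hsplit, hc] at huv
        · exact huv (theta_add _)
        · exact huv (add_theta _)
      have hall : ∀ i j, g (pair i j) ≠ theta n := by
        intro i j
        have h1 : g (pair i₀ j) ≠ theta n := (key _ _ h₀ j).1
        exact (key _ _ h1 i).2
      have hex : ∀ i j, ∃ x y, g (pair i j) = pair x y := by
        intro i j
        rcases brandt_cases (g (pair i j)) with h | h
        · exact absurd h (hall i j)
        · exact h
      choose X Y hXY using fun i => hex i
      have hrel : ∀ i j k, Y i k = X k j ∧ X i j = X i k ∧ Y i j = Y k j := by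
        intro i j k
        have hsplit : g (pair i j) = g (pair i k) + g (pair k j) := by
          have : pair i j = pair i k + pair k j := by rw [pair_add_pair, if_pos rfl]
          rw [this, hg]
        rw [hXY, hXY, hXY, pair_add_pair] at hsplit
        by_cases h : Y i k = X k j
        · rw [if_pos h] at hsplit
          obtain ⟨h1, h2⟩ := pair_inj.mp hsplit
          exact ⟨h, h1, h2⟩
        · rw [if_neg h] at hsplit
          exact absurd hsplit pair_ne_theta
      set τ : Fin n → Fin n := fun k => X k k with hτ
      have hYX : ∀ k, Y k k = X k k := fun k => (hrel k k k).1
      have hX : ∀ i j, X i j = τ i := fun i j => (hrel i j i).2.1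
      have hY : ∀ i j, Y i j = τ j := fun i j => by
        rw [(hrel i j j).2.2, hYX j]
      have hval : ∀ i j, g (pair i j) = pair (τ i) (τ j) := fun i j => by
        rw [hXY, hX, hY]
      have hinj : Function.Injective τ := by
        intro j k hjk
        by_contra hne
        have hz : g (pair j j + pair k k) = theta n := by
          rw [pair_add_pair, if_neg hne]; exact hθ
        rw [hg, hval, hval, pair_add_pair, if_pos hjk] at hz
        exact pair_ne_theta hz
      refine Or.inr (Or.inr ⟨Equiv.ofBijective τ (Finite.injective_iff_bijective.mp hinj), hθ, fun i j => ?_⟩)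
      rw [hval]; rfl
  · -- g θ = pair r r'
    have hrr' : r' = r := by
      by_contra hne
      rw [hrr, pair_add_pair, if_neg hne] at h0
      exact pair_ne_theta h0
    have hrr2 : g (theta n) = pair r r := by rw [hrr, hrr']
    refine Or.inl ⟨r, funext fun a => ?_⟩
    show g a = pair r r
    have ha : g (theta n) = g a + g (theta n) := by
      conv_lhs => rw [← add_theta a, hg]
    rw [hrr2] at ha
    rcases brandt_cases (g a) with hga | ⟨x, y, hga⟩
    · rw [hga, theta_add] at ha
      exact absurd ha pair_ne_theta
    · rw [hga, pair_add_pair] at ha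
      by_cases hy : y = r
      · rw [if_pos hy] at ha
        obtain ⟨hx, -⟩ := pair_inj.mp ha.symm
        rw [hga, hx, hy]
      · rw [if_neg hy] at ha
        exact absurd ha pair_ne_theta

lemma goodForm_affine {f : MB n} (hf : IsAffine f) : GoodForm f := by
  obtain ⟨g, c, hg, rfl⟩ := hf
  rcases endo_classify g hg with ⟨r, rfl⟩ | hz | ⟨σ, hθ, hσ⟩
  · rcases brandt_cases c with rfl | ⟨p, q, rfl⟩
    · exact Or.inl (funext fun x => add_theta _)
    · by_cases hrp : r = p
      · refine Or.inr (Or.inl ⟨r, q, funext fun x => ?_⟩)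
        show pair r r + pair p q = pair r q
        rw [pair_add_pair, if_pos hrp]
      · refine Or.inl (funext fun x => ?_)
        show pair r r + pair p q = theta n
        rw [pair_add_pair, if_neg hrp]
  · refine Or.inl (funext fun x => ?_)
    show g x + c = theta n
    rw [hz x, theta_add]
  · rcases brandt_cases c with rfl | ⟨p, q, rfl⟩
    · exact Or.inl (funext fun x => add_theta _)
    · refine Or.inr (Or.inr ⟨Finset.univ, σ⁻¹ p, σ, q, funext fun x => ?_⟩)
      rcases brandt_cases x with rfl | ⟨i, j, rfl⟩
      · show g (theta n) + pair p q = colMap _ _ _ _ (theta n)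
        rw [hθ, colMap_theta, theta_add]
      · show g (pair i j) + pair p q = colMap _ _ _ _ (pair i j)
        rw [hσ, pair_add_pair, colMap_pair]
        by_cases h : j = σ⁻¹ p
        · have h2 : σ j = p := by rw [h]; exact Equiv.apply_symm_apply σ p
          rw [if_pos h2, if_pos ⟨h, Finset.mem_univ i⟩]
        · have h2 : ¬σ j = p := fun hc => h (by rw [← hc]; exact (Equiv.symm_apply_apply σ j).symm)
          rw [if_neg h2, if_neg (fun hc : j = σ⁻¹ p ∧ i ∈ Finset.univ => h hc.1)]

lemma goodForm_add {f g : MB n} (hf : GoodForm f) (hg : GoodForm g) : GoodForm (f + g) := by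
  rcases hf with rfl | ⟨a, b, rfl⟩ | ⟨A, p, σ, q, rfl⟩
  · -- θ + g = θ
    exact Or.inl (funext fun x => theta_add _)
  · rcases hg with rfl | ⟨c, d, rfl⟩ | ⟨A, p, σ, q, rfl⟩
    · exact Or.inl (funext fun x => add_theta _)
    · -- const + const
      by_cases h : b = c
      · exact Or.inr (Or.inl ⟨a, d, funext fun x => by
          show pair a b + pair c d = pair a d
          rw [pair_add_pair, if_pos h]⟩)
      · exact Or.inl (funext fun x => by
          show pair a b + pair c d = theta n
          rw [pair_add_pair, if_neg h])
    · -- const (a,b) + colMap A p σ q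
      refine Or.inr (Or.inr ⟨A ∩ {σ.symm b}, p, σ.trans (Equiv.swap b a), q,
        funext fun x => ?_⟩)
      rcases brandt_cases x with rfl | ⟨i, j, rfl⟩
      · show pair a b + colMap A p σ q (theta n) = _
        rw [colMap_theta, add_theta, colMap_theta]
      · show pair a b + colMap A p σ q (pair i j) = _
        rw [colMap_pair, colMap_pair]
        by_cases h1 : j = p ∧ i ∈ A
        · rw [if_pos h1, pair_add_pair]
          by_cases h2 : b = σ i
          · have hi : i = σ.symm b := by rw [h2, Equiv.symm_apply_apply]
            rw [if_pos h2, if_pos ⟨h1.1, Finset.mem_inter.mpr ⟨h1.2, Finset.mem_singleton.mpr hi⟩⟩]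
            congr 1
            show a = Equiv.swap b a (σ i)
            rw [← h2, Equiv.swap_apply_left]
          · rw [if_neg h2, if_neg ?_]
            rintro ⟨-, hmem⟩
            obtain ⟨-, hi⟩ := Finset.mem_inter.mp hmem
            exact h2 (by rw [Finset.mem_singleton.mp hi, Equiv.apply_symm_apply])
        · rw [if_neg h1, add_theta, if_neg ?_]
          rintro ⟨hj, hmem⟩
          exact h1 ⟨hj, (Finset.mem_inter.mp hmem).1⟩
  · rcases hg with rfl | ⟨c, d, rfl⟩ | ⟨A₂, p₂, σ₂, q₂, rfl⟩
    · exact Or.inl (funext fun x => add_theta _)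
    · -- colMap + const (c,d)
      by_cases h : q = c
      · refine Or.inr (Or.inr ⟨A, p, σ, d, funext fun x => ?_⟩)
        rcases brandt_cases x with rfl | ⟨i, j, rfl⟩
        · rfl
        · show colMap A p σ q (pair i j) + pair c d = _
          rw [colMap_pair, colMap_pair]
          by_cases h1 : j = p ∧ i ∈ A
          · rw [if_pos h1, if_pos h1, pair_add_pair, if_pos h]
          · rw [if_neg h1, if_neg h1, theta_add]
      · refine Or.inl (funext fun x => ?_)
        rcases brandt_cases x with rfl | ⟨i, j, rfl⟩
        · rfl
        · show colMap A p σ q (pair i j) + pair c d = theta n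
          rw [colMap_pair]
          by_cases h1 : j = p ∧ i ∈ A
          · rw [if_pos h1, pair_add_pair, if_neg h]
          · rw [if_neg h1, theta_add]
    · -- colMap + colMap
      by_cases hp : p = p₂
      · subst hp
        refine Or.inr (Or.inr ⟨A ∩ A₂ ∩ {σ₂.symm q}, p, σ, q₂, funext fun x => ?_⟩)
        rcases brandt_cases x with rfl | ⟨i, j, rfl⟩
        · rfl
        · show colMap A p σ q (pair i j) + colMap A₂ p σ₂ q₂ (pair i j) = _
          rw [colMap_pair, colMap_pair, colMap_pair]
          by_cases h1 : j = p ∧ i ∈ A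
          · rw [if_pos h1]
            by_cases h2 : i ∈ A₂
            · rw [if_pos ⟨h1.1, h2⟩, pair_add_pair]
              by_cases h3 : q = σ₂ i
              · have hi : i = σ₂.symm q := by rw [h3, Equiv.symm_apply_apply]
                rw [if_pos h3, if_pos ⟨h1.1, by
                  simp only [Finset.mem_inter, Finset.mem_singleton]
                  exact ⟨⟨h1.2, h2⟩, hi⟩⟩]
              · rw [if_neg h3, if_neg ?_]
                rintro ⟨-, hmem⟩
                simp only [Finset.mem_inter, Finset.mem_singleton] at hmem
                exact h3 (by rw [hmem.2, Equiv.apply_symm_apply])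
            · rw [if_neg (fun hc => h2 hc.2), add_theta, if_neg ?_]
              rintro ⟨-, hmem⟩
              simp only [Finset.mem_inter, Finset.mem_singleton] at hmem
              exact h2 hmem.1.2
          · rw [if_neg h1, theta_add, if_neg ?_]
            rintro ⟨hj, hmem⟩
            simp only [Finset.mem_inter, Finset.mem_singleton] at hmem
            exact h1 ⟨hj, hmem.1.1⟩
      · refine Or.inl (funext fun x => ?_)
        rcases brandt_cases x with rfl | ⟨i, j, rfl⟩
        · rfl
        · show colMap A p σ q (pair i j) + colMap A₂ p₂ σ₂ q₂ (pair i j) = theta n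
          rw [colMap_pair, colMap_pair]
          by_cases h1 : j = p ∧ i ∈ A
          · rw [if_pos h1, if_neg (fun hc : j = p₂ ∧ i ∈ A₂ => hp (h1.1.symm.trans hc.1)), add_theta]
          · rw [if_neg h1, theta_add]

lemma goodForm_of_mem {f : MB n} (hf : f ∈ AplusSet n) : GoodForm f := by
  induction hf using AddSubsemigroup.closure_induction with
  | mem x hx => exact goodForm_affine hx
  | add x y hx hy ihx ihy => exact goodForm_add ihx ihy

/-- `v` has the same "first coordinate behaviour" as `f` wherever `f` is nonzero. -/
def leftAgree (v f : MB n) : Prop :=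
  ∀ x (i j : Fin n), f x = pair i j → ∃ j', v x = pair i j'

lemma exists_leftAgree (V : Set (MB n)) {f : MB n}
    (hf : f ∈ AddSubsemigroup.closure V) : ∃ v ∈ V, leftAgree v f := by
  induction hf using AddSubsemigroup.closure_induction with
  | mem x hx => exact ⟨x, hx, fun x i j h => ⟨j, h⟩⟩
  | add x y hx hy ihx ihy =>
    obtain ⟨v, hvV, hla⟩ := ihx
    refine ⟨v, hvV, fun z i j h => ?_⟩
    obtain ⟨k, hxz, -⟩ := add_eq_pair (a := x z) (b := y z) h
    exact hla z i k hxz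

lemma xi_pair_mem (p q : Fin n) : xi (pair p q) ∈ AplusSet n := by
  refine AddSubsemigroup.subset_closure ⟨xi (pair p p), pair p q, ?_, ?_⟩
  · intro a b
    show pair p p = pair p p + pair p p
    rw [pair_add_pair, if_pos rfl]
  · funext x
    show pair p q = pair p p + pair p q
    rw [pair_add_pair, if_pos rfl]

/-- The automorphism of `B_n` induced by a permutation. -/
def autoOf (σ : Equiv.Perm (Fin n)) : MB n :=
  fun a => Option.map (fun y : Fin n × Fin n => (σ y.1, σ y.2)) a

lemma autoOf_theta (σ : Equiv.Perm (Fin n)) : autoOf σ (theta n) = theta n := rfl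

lemma autoOf_pair (σ : Equiv.Perm (Fin n)) (i j : Fin n) :
    autoOf σ (pair i j) = pair (σ i) (σ j) := rfl

lemma isEndo_autoOf (σ : Equiv.Perm (Fin n)) : IsEndo (autoOf σ) := by
  intro a b
  rcases brandt_cases a with rfl | ⟨i, j, rfl⟩
  · rw [theta_add, autoOf_theta, theta_add]
  rcases brandt_cases b with rfl | ⟨k, l, rfl⟩
  · rw [add_theta, autoOf_theta, add_theta]
  rw [autoOf_pair, autoOf_pair, pair_add_pair, pair_add_pair]
  by_cases h : j = k
  · rw [if_pos h, if_pos (by rw [h]), autoOf_pair]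
  · rw [if_neg h, if_neg (fun hc => h (σ.injective hc)), autoOf_theta]

lemma nMap_theta (p q : Fin n) (σ : Equiv.Perm (Fin n)) :
    nMap p q σ (theta n) = theta n := rfl

lemma nMap_pair (p q i j : Fin n) (σ : Equiv.Perm (Fin n)) :
    nMap p q σ (pair i j) = if j = p then pair (σ i) q else theta n := rfl

lemma nMap_mem (p q : Fin n) (σ : Equiv.Perm (Fin n)) : nMap p q σ ∈ AplusSet n := by
  refine AddSubsemigroup.subset_closure ⟨autoOf σ, pair (σ p) q, isEndo_autoOf σ, ?_⟩
  funext x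
  rcases brandt_cases x with rfl | ⟨i, j, rfl⟩
  · show nMap p q σ (theta n) = autoOf σ (theta n) + pair (σ p) q
    rw [nMap_theta, autoOf_theta, theta_add]
  · show nMap p q σ (pair i j) = autoOf σ (pair i j) + pair (σ p) q
    rw [nMap_pair, autoOf_pair, pair_add_pair]
    by_cases h : j = p
    · rw [if_pos h, if_pos (by rw [h])]
    · rw [if_neg h, if_neg (fun hc => h (σ.injective hc))]

lemma supp_xi_pair (a b : Fin n) : supp (xi (pair a b)) = Set.univ :=
  Set.eq_univ_of_forall fun _ => pair_ne_theta

lemma card_brandt : Fintype.card (Brandt n) = n ^ 2 + 1 := by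
  show Fintype.card (Option (Fin n × Fin n)) = n ^ 2 + 1
  rw [Fintype.card_option, Fintype.card_prod, Fintype.card_fin, pow_two]

lemma ncard_supp_xi_pair (a b : Fin n) : (supp (xi (pair a b))).ncard = n ^ 2 + 1 := by
  rw [supp_xi_pair, Set.ncard_univ, Nat.card_eq_fintype_card, card_brandt]

lemma supp_nMap (p q : Fin n) (σ : Equiv.Perm (Fin n)) :
    supp (nMap p q σ) = Set.range (fun i : Fin n => pair i p) := by
  ext x
  simp only [supp, Set.mem_setOf_eq, Set.mem_range]
  constructor
  · intro hx
    rcases brandt_cases x with rfl | ⟨i, j, rfl⟩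
    · exact absurd (nMap_theta p q σ) hx
    · rw [nMap_pair] at hx
      by_cases h : j = p
      · exact ⟨i, by rw [h]⟩
      · rw [if_neg h] at hx; exact absurd rfl hx
  · rintro ⟨i, rfl⟩
    rw [nMap_pair, if_pos rfl]
    exact pair_ne_theta

lemma ncard_supp_nMap (p q : Fin n) (σ : Equiv.Perm (Fin n)) :
    (supp (nMap p q σ)).ncard = n := by
  rw [supp_nMap, ← Set.image_univ,
    Set.ncard_image_of_injective _ (fun i j h => (pair_inj.mp h).1),
    Set.ncard_univ, Nat.card_eq_fintype_card, Fintype.card_fin]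

end Stmt5Aux

namespace Stmt5Aux
open Brandt

lemma colMap_univ_eq_nMap (p q : Fin n) (σ : Equiv.Perm (Fin n)) :
    colMap (Finset.univ) p σ q = nMap p q σ := by
  funext x
  rcases brandt_cases x with rfl | ⟨i, j, rfl⟩
  · rfl
  · rw [colMap_pair, nMap_pair]
    by_cases h : j = p
    · rw [if_pos ⟨h, Finset.mem_univ i⟩, if_pos h]
    · rw [if_neg (fun hc : j = p ∧ _ => h hc.1), if_neg h]

end Stmt5Aux


open Stmt5Aux Brandt in
/-- For `n ≥ 2`, every generating set of `A⁺(Bₙ)` contains at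
least `n` elements of full support and at least `n·(n!)` elements of
`n`-support. -/
theorem stmt_5 (n : ℕ) (hn : 2 ≤ n) (V : Set (MB n)) (hV : V ⊆ AplusSet n)
    (hgen : (AddSubsemigroup.closure V : Set (MB n)) = AplusSet n) :
    n ≤ (V ∩ {f | (supp f).ncard = n ^ 2 + 1}).ncard ∧
    n * n.factorial ≤ (V ∩ {f | (supp f).ncard = n}).ncard := by
  have hgenV : ∀ f, f ∈ AplusSet n → f ∈ AddSubsemigroup.closure V := by
    intro f hf
    rw [← hgen] at hf
    exact hf
  set z : Fin n := ⟨0, by omega⟩ with hzdef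
  set o : Fin n := ⟨1, by omega⟩ with hodef
  have hzo : z ≠ o := by
    intro h
    have : (0 : ℕ) = 1 := congrArg Fin.val h
    omega
  constructor
  · -- full support part
    have hfull : ∀ p : Fin n, ∃ b, xi (pair p b) ∈ V := by
      intro p
      obtain ⟨v, hvV, hla⟩ := exists_leftAgree V (hgenV _ (xi_pair_mem p p))
      obtain ⟨j', hv⟩ := hla (theta n) p p rfl
      rcases goodForm_of_mem (hV hvV) with hform | ⟨a, b, hform⟩ | ⟨A, p', σ, q, hform⟩
      · rw [hform] at hv
        exact absurd hv.symm pair_ne_theta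
      · rw [hform] at hv
        have := pair_inj.mp (show pair a b = pair p j' from hv)
        exact ⟨b, by rw [← this.1]; exact hform ▸ hvV⟩
      · rw [hform] at hv
        exact absurd hv.symm pair_ne_theta
    choose bf hbf using hfull
    have hinj : Function.Injective (fun p : Fin n => xi (pair p (bf p))) := by
      intro p p' h
      have h2 := congrFun h (theta n)
      exact (pair_inj.mp (show pair p (bf p) = pair p' (bf p') from h2)).1
    have hsub : Set.range (fun p : Fin n => xi (pair p (bf p))) ⊆
        V ∩ {f | (supp f).ncard = n ^ 2 + 1} := by
      rintro _ ⟨p, rfl⟩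
      exact ⟨hbf p, ncard_supp_xi_pair p (bf p)⟩
    calc n = (Set.range fun p : Fin n => xi (pair p (bf p))).ncard := by
            rw [← Set.image_univ, Set.ncard_image_of_injective _ hinj, Set.ncard_univ,
              Nat.card_eq_fintype_card, Fintype.card_fin]
      _ ≤ _ := Set.ncard_le_ncard hsub (Set.toFinite _)
  · -- n-support part
    have hnsupp : ∀ (p : Fin n) (σ : Equiv.Perm (Fin n)), ∃ q, nMap p q σ ∈ V := by
      intro p σ
      obtain ⟨v, hvV, hla⟩ := exists_leftAgree V (hgenV _ (nMap_mem p p σ))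
      have heval : ∀ i : Fin n, nMap p p σ (pair i p) = pair (σ i) p := fun i => by
        rw [nMap_pair, if_pos rfl]
      rcases goodForm_of_mem (hV hvV) with hform | ⟨a, b, hform⟩ | ⟨A, p', σ', q', hform⟩
      · obtain ⟨j', hv⟩ := hla (pair z p) (σ z) p (heval z)
        rw [hform] at hv
        exact absurd hv.symm pair_ne_theta
      · obtain ⟨j1, hv1⟩ := hla (pair z p) (σ z) p (heval z)
        obtain ⟨j2, hv2⟩ := hla (pair o p) (σ o) p (heval o)
        rw [hform] at hv1 hv2
        have e1 := (pair_inj.mp (show pair a b = pair (σ z) j1 from hv1)).1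
        have e2 := (pair_inj.mp (show pair a b = pair (σ o) j2 from hv2)).1
        exact absurd (σ.injective (e1.symm.trans e2)) hzo
      · have hcol : ∀ i : Fin n, p = p' ∧ i ∈ A ∧ σ' i = σ i := by
          intro i
          obtain ⟨j', hv⟩ := hla (pair i p) (σ i) p (heval i)
          rw [hform, colMap_pair] at hv
          by_cases hc : p = p' ∧ i ∈ A
          · rw [if_pos hc] at hv
            exact ⟨hc.1, hc.2, (pair_inj.mp hv).1⟩
          · rw [if_neg hc] at hv
            exact absurd hv.symm pair_ne_theta
        obtain ⟨hp', -, -⟩ := hcol z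
        subst hp'
        have hA : A = Finset.univ := Finset.eq_univ_iff_forall.mpr fun i => (hcol i).2.1
        have hσ : σ' = σ := Equiv.ext fun i => (hcol i).2.2
        refine ⟨q', ?_⟩
        have hv' : v = nMap p q' σ := by
          rw [hform, hA, hσ, colMap_univ_eq_nMap]
        exact hv' ▸ hvV
    choose qf hqf using hnsupp
    have hinj : Function.Injective
        (fun x : Fin n × Equiv.Perm (Fin n) => nMap x.1 (qf x.1 x.2) x.2) := by
      rintro ⟨p, σ⟩ ⟨p₂, σ₂⟩ h
      simp only at h
      have h1 := congrFun h (pair z p)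
      rw [nMap_pair, nMap_pair, if_pos rfl] at h1
      by_cases hp : p = p₂
      · subst hp
        have hσ : σ = σ₂ := Equiv.ext fun i => by
          have h2 := congrFun h (pair i p)
          rw [nMap_pair, nMap_pair, if_pos rfl, if_pos rfl] at h2
          exact (pair_inj.mp h2).1
        rw [hσ]
      · rw [if_neg hp] at h1
        exact absurd h1 pair_ne_theta
    have hsub : Set.range (fun x : Fin n × Equiv.Perm (Fin n) => nMap x.1 (qf x.1 x.2) x.2) ⊆
        V ∩ {f | (supp f).ncard = n} := by
      rintro _ ⟨⟨p, σ⟩, rfl⟩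
      exact ⟨hqf p σ, ncard_supp_nMap p (qf p σ) σ⟩
    calc n * n.factorial
        = (Set.range fun x : Fin n × Equiv.Perm (Fin n) => nMap x.1 (qf x.1 x.2) x.2).ncard := by
          rw [← Set.image_univ, Set.ncard_image_of_injective _ hinj, Set.ncard_univ,
            Nat.card_eq_fintype_card, Fintype.card_prod, Fintype.card_fin,
            Fintype.card_perm, Fintype.card_fin]
      _ ≤ _ := Set.ncard_le_ncard hsub (Set.toFinite _)
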